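/- arXiv:1407.7206 — 4 statements merged into one kernel-verified Lean document; each statement's English description precedes it below -/
import Mathlib

section
/- Let q ≥ 3 be a prime power and A = 𝔽_q[T]. Let m ∈ A be a monic polynomial of degree d ≥ 1 and let α ∈ A be a nonzero polynomial. If C_m(α) is a monic irreducible polynomial in A, then m is irreducible in A and α is a nonzero constant, i.e. α ∈ 𝔽_q^×. -/
open Polynomial

/-- Compositional iterates of the Carlitz polynomial `C_T(x) = T·x + x^q`, so that
`carlitzTpow F n = C_{T^n}(x) ∈ (𝔽_q[T])[x]` (here `q = Fintype.card F`). -/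
noncomputable def carlitzTpow (F : Type) [Field F] [Fintype F] : ℕ → Polynomial (Polynomial F)
  | 0 => X
  | n + 1 => (carlitzTpow F n).comp (Polynomial.C Polynomial.X * X + X ^ (Fintype.card F))

/-- The Carlitz module polynomial `C_m(x) ∈ (𝔽_q[T])[x]` for `m ∈ A = 𝔽_q[T]`:
it is determined by `𝔽_q`-linearity in `m` together with
`C_{T^n}(x) = C_T(C_T(⋯ C_T(x)⋯))` (`n`-fold composition of `C_T(x) = T·x + x^q`). -/
noncomputable def carlitz (F : Type) [Field F] [Fintype F] (m : Polynomial F) :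
    Polynomial (Polynomial F) :=
  m.sum fun i c => Polynomial.C (Polynomial.C c) * carlitzTpow F i

/-- Evaluation `C_m(α) ∈ 𝔽_q[T]` of the Carlitz polynomial `C_m(x)` at `α ∈ 𝔽_q[T]`. -/
noncomputable def carlitzEval (F : Type) [Field F] [Fintype F] (m α : Polynomial F) :
    Polynomial F :=
  (carlitz F m).eval α

section Aux3
variable (F : Type) [Field F] [Fintype F]

lemma eval_carlitzT (β : Polynomial F) :
    (Polynomial.C Polynomial.X * X + X ^ (Fintype.card F)).eval β
      = X * β + β ^ (Fintype.card F) := by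
  simp

lemma carlitzTpow_eval_add (n : ℕ) (u v : Polynomial F) :
    (carlitzTpow F n).eval (u + v) = (carlitzTpow F n).eval u + (carlitzTpow F n).eval v := by
  induction n generalizing u v with
  | zero => simp [carlitzTpow]
  | succ n ih =>
    obtain ⟨p, hc⟩ := CharP.exists F
    haveI := hc
    obtain ⟨k, hp, hcard⟩ := FiniteField.card F p
    haveI : Fact p.Prime := ⟨hp⟩
    have hq : (u + v) ^ (Fintype.card F) = u ^ (Fintype.card F) + v ^ (Fintype.card F) := by
      rw [hcard]; exact add_pow_char_pow u v p k
    have h1 : (Polynomial.C Polynomial.X * X + X ^ (Fintype.card F)).eval (u+v)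
        = (Polynomial.C Polynomial.X * X + X ^ (Fintype.card F)).eval u
          + (Polynomial.C Polynomial.X * X + X ^ (Fintype.card F)).eval v := by
      simp only [eval_carlitzT, hq]; ring
    simp only [carlitzTpow, eval_comp, h1, ih]

lemma carlitzTpow_eval_C_mul (n : ℕ) (c : F) (u : Polynomial F) :
    (carlitzTpow F n).eval (Polynomial.C c * u)
      = Polynomial.C c * (carlitzTpow F n).eval u := by
  induction n generalizing u with
  | zero => simp [carlitzTpow]
  | succ n ih =>
    have hq : (Polynomial.C c) ^ (Fintype.card F) = Polynomial.C c := by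
      rw [← map_pow, FiniteField.pow_card]
    have h1 : (Polynomial.C Polynomial.X * X + X ^ (Fintype.card F)).eval (Polynomial.C c * u)
        = Polynomial.C c * (Polynomial.C Polynomial.X * X + X ^ (Fintype.card F)).eval u := by
      simp only [eval_carlitzT, mul_pow, hq]; ring
    simp only [carlitzTpow, eval_comp, h1, ih]


lemma X_dvd_carlitzT :
    (X : Polynomial (Polynomial F)) ∣ (Polynomial.C Polynomial.X * X + X ^ (Fintype.card F)) :=
  dvd_add (dvd_mul_left X _) (dvd_pow_self X Fintype.card_pos.ne')

lemma X_dvd_carlitzTpow (n : ℕ) : (X : Polynomial (Polynomial F)) ∣ carlitzTpow F n := by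
  induction n with
  | zero => exact dvd_refl _
  | succ n ih =>
    obtain ⟨g, hg⟩ := ih
    rw [carlitzTpow, hg, mul_comp, X_comp]
    exact Dvd.dvd.mul_right (X_dvd_carlitzT F) _

lemma X_dvd_carlitz (m : Polynomial F) : (X : Polynomial (Polynomial F)) ∣ carlitz F m := by
  unfold carlitz Polynomial.sum
  exact Finset.dvd_sum fun i _ => Dvd.dvd.mul_left (X_dvd_carlitzTpow F i) _

lemma self_dvd_carlitzEval (m α : Polynomial F) : α ∣ carlitzEval F m α := by
  obtain ⟨g, hg⟩ := X_dvd_carlitz F m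
  exact ⟨g.eval α, by rw [carlitzEval, hg, eval_mul, eval_X]⟩

lemma carlitz_eq_sum_range (m : Polynomial F) {N : ℕ} (hN : m.natDegree < N) :
    carlitz F m
      = ∑ i ∈ Finset.range N, Polynomial.C (Polynomial.C (m.coeff i)) * carlitzTpow F i := by
  exact m.sum_over_range' (fun n => by simp) N hN

lemma carlitzEval_eq_sum_range (m α : Polynomial F) {N : ℕ} (hN : m.natDegree < N) :
    carlitzEval F m α
      = ∑ i ∈ Finset.range N, Polynomial.C (m.coeff i) * (carlitzTpow F i).eval α := by
  rw [carlitzEval, carlitz_eq_sum_range F m hN, eval_finset_sum]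
  refine Finset.sum_congr rfl fun i _ => by rw [eval_mul, eval_C]

lemma carlitz_add (m m' : Polynomial F) :
    carlitz F (m + m') = carlitz F m + carlitz F m' := by
  unfold carlitz
  rw [Polynomial.sum_add_index] <;> intros <;> simp [add_mul]

lemma carlitz_C_mul (c : F) (m : Polynomial F) :
    carlitz F (Polynomial.C c * m) = Polynomial.C (Polynomial.C c) * carlitz F m := by
  have h1 : (Polynomial.C c * m).natDegree < m.natDegree + 1 :=
    lt_of_le_of_lt (natDegree_C_mul_le c m) (Nat.lt_succ_self _)
  rw [carlitz_eq_sum_range F _ h1, carlitz_eq_sum_range F m (Nat.lt_succ_self _),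
    Finset.mul_sum]
  refine Finset.sum_congr rfl fun i _ => ?_
  rw [coeff_C_mul, map_mul, map_mul, mul_assoc]

lemma carlitz_X_pow (j : ℕ) : carlitz F (X ^ j) = carlitzTpow F j := by
  unfold carlitz
  have : (X ^ j : Polynomial F) = Polynomial.monomial j 1 := by
    rw [← C_mul_X_pow_eq_monomial, map_one, one_mul]
  rw [this, Polynomial.sum_monomial_index _ _ (by simp)]
  simp

lemma finset_sum_comp {ι : Type*} (s : Finset ι) (f : ι → Polynomial (Polynomial F))
    (r : Polynomial (Polynomial F)) :
    (∑ i ∈ s, f i).comp r = ∑ i ∈ s, (f i).comp r := by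
  induction s using Finset.cons_induction with
  | empty => simp
  | cons a s ha ih => simp [Finset.sum_cons, add_comp, ih]

lemma carlitz_X_mul (m : Polynomial F) :
    carlitz F (X * m)
      = (carlitz F m).comp (Polynomial.C Polynomial.X * X + X ^ (Fintype.card F)) := by
  by_cases hm : m = 0
  · simp [hm, carlitz, Polynomial.sum_zero_index]
  have hdeg : (X * m).natDegree < m.natDegree + 2 := by
    rw [natDegree_mul X_ne_zero hm, natDegree_X]
    omega
  rw [carlitz_eq_sum_range F _ hdeg, carlitz_eq_sum_range F m (Nat.lt_succ_self _),
    finset_sum_comp, Finset.sum_range_succ']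
  rw [coeff_X_mul_zero]
  simp only [map_zero, zero_mul, add_zero]
  refine Finset.sum_congr rfl fun i _ => ?_
  rw [coeff_X_mul, mul_comp, C_comp]
  rfl

lemma carlitz_X_pow_mul (j : ℕ) (m : Polynomial F) :
    carlitz F (X ^ j * m) = (carlitz F m).comp (carlitzTpow F j) := by
  induction j with
  | zero => simp [carlitzTpow, comp_X]
  | succ j ih =>
    have h : (X : Polynomial F) ^ (j+1) * m = X * (X ^ j * m) := by ring
    rw [h, carlitz_X_mul, ih, comp_assoc]
    rfl

lemma carlitzEval_add_right (m u v : Polynomial F) :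
    carlitzEval F m (u + v) = carlitzEval F m u + carlitzEval F m v := by
  rw [carlitzEval_eq_sum_range F m (u+v) (Nat.lt_succ_self _),
    carlitzEval_eq_sum_range F m u (Nat.lt_succ_self _),
    carlitzEval_eq_sum_range F m v (Nat.lt_succ_self _), ← Finset.sum_add_distrib]
  refine Finset.sum_congr rfl fun i _ => ?_
  rw [carlitzTpow_eval_add, mul_add]

lemma carlitzEval_C_mul_right (m : Polynomial F) (c : F) (u : Polynomial F) :
    carlitzEval F m (Polynomial.C c * u) = Polynomial.C c * carlitzEval F m u := by
  rw [carlitzEval_eq_sum_range F m _ (Nat.lt_succ_self _),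
    carlitzEval_eq_sum_range F m u (Nat.lt_succ_self _), Finset.mul_sum]
  refine Finset.sum_congr rfl fun i _ => ?_
  rw [carlitzTpow_eval_C_mul]
  ring

lemma carlitzEval_add_left (m m' α : Polynomial F) :
    carlitzEval F (m + m') α = carlitzEval F m α + carlitzEval F m' α := by
  rw [carlitzEval, carlitz_add, eval_add]; rfl

lemma carlitzEval_C_mul_left (c : F) (m α : Polynomial F) :
    carlitzEval F (Polynomial.C c * m) α = Polynomial.C c * carlitzEval F m α := by
  rw [carlitzEval, carlitz_C_mul, eval_mul, eval_C]; rfl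

lemma carlitzEval_X_pow (j : ℕ) (α : Polynomial F) :
    carlitzEval F (X ^ j) α = (carlitzTpow F j).eval α := by
  rw [carlitzEval, carlitz_X_pow]

lemma carlitzEval_mul (m m' α : Polynomial F) :
    carlitzEval F (m * m') α = carlitzEval F m (carlitzEval F m' α) := by
  induction m' using Polynomial.induction_on' with
  | add p q hp hq =>
    rw [mul_add, carlitzEval_add_left, hp, hq, carlitzEval_add_left, carlitzEval_add_right]
  | monomial j c =>
    rw [← C_mul_X_pow_eq_monomial]
    have h : m * (Polynomial.C c * X ^ j) = Polynomial.C c * (X ^ j * m) := by ring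
    rw [h, carlitzEval_C_mul_left, carlitzEval_C_mul_left, carlitzEval_C_mul_right,
      carlitzEval_X_pow]
    have h2 : carlitzEval F (X ^ j * m) α = carlitzEval F m ((carlitzTpow F j).eval α) := by
      rw [carlitzEval, carlitz_X_pow_mul, eval_comp]; rfl
    rw [h2]

lemma natDegree_carlitzTpow_eval (hq3 : 3 ≤ Fintype.card F) (n : ℕ) (β : Polynomial F)
    (hβ : 1 ≤ β.natDegree) :
    ((carlitzTpow F n).eval β).natDegree = Fintype.card F ^ n * β.natDegree := by
  induction n generalizing β with
  | zero => simp [carlitzTpow]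
  | succ n ih =>
    have hβ0 : β ≠ 0 := fun h => by simp [h] at hβ
    have h2 : (β ^ Fintype.card F).natDegree = Fintype.card F * β.natDegree :=
      natDegree_pow β _
    have hlt : (X * β).natDegree < (β ^ Fintype.card F).natDegree := by
      rw [natDegree_mul X_ne_zero hβ0, natDegree_X, h2]
      nlinarith [hβ, hq3]
    have hγdeg : (X * β + β ^ Fintype.card F).natDegree = Fintype.card F * β.natDegree := by
      rw [natDegree_add_eq_right_of_natDegree_lt hlt, h2]
    have hγ1 : 1 ≤ (X * β + β ^ Fintype.card F).natDegree := by
      rw [hγdeg]; nlinarith [hβ, hq3]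
    have := ih _ hγ1
    rw [carlitzTpow, eval_comp, eval_carlitzT, this, hγdeg, pow_succ]
    ring

lemma carlitzTpow_eval_ne_zero (hq3 : 3 ≤ Fintype.card F) (n : ℕ) (β : Polynomial F)
    (hβ : 1 ≤ β.natDegree) : (carlitzTpow F n).eval β ≠ 0 := by
  intro h
  have := natDegree_carlitzTpow_eval F hq3 n β hβ
  rw [h, natDegree_zero] at this
  have h1 : 1 ≤ Fintype.card F ^ n := Nat.one_le_pow _ _ (by omega)
  nlinarith

lemma natDegree_carlitzEval (hq3 : 3 ≤ Fintype.card F) (m : Polynomial F) (hm : m ≠ 0)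
    (β : Polynomial F) (hβ : 1 ≤ β.natDegree) :
    (carlitzEval F m β).natDegree = Fintype.card F ^ m.natDegree * β.natDegree := by
  set d := m.natDegree with hd
  rw [carlitzEval_eq_sum_range F m β (Nat.lt_succ_self _), Finset.sum_range_succ]
  have hlc : m.coeff d ≠ 0 := by
    rw [hd]; exact mt Polynomial.leadingCoeff_eq_zero.mp hm
  have htop : (Polynomial.C (m.coeff d) * (carlitzTpow F d).eval β).natDegree
      = Fintype.card F ^ d * β.natDegree := by
    rw [natDegree_C_mul (by simpa using hlc), natDegree_carlitzTpow_eval F hq3 d β hβ]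
  have hqpow : 1 ≤ Fintype.card F ^ d := Nat.one_le_pow _ _ (by omega)
  have hq1 : 1 ≤ Fintype.card F ^ d * β.natDegree := by nlinarith
  have hrest : (∑ i ∈ Finset.range d,
      Polynomial.C (m.coeff i) * (carlitzTpow F i).eval β).natDegree
        < Fintype.card F ^ d * β.natDegree := by
    have hbound : ∀ i ∈ Finset.range d,
        (Polynomial.C (m.coeff i) * (carlitzTpow F i).eval β).natDegree
          ≤ Fintype.card F ^ d * β.natDegree - 1 := by
      intro i hi
      rw [Finset.mem_range] at hi
      calc (Polynomial.C (m.coeff i) * (carlitzTpow F i).eval β).natDegree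
          ≤ ((carlitzTpow F i).eval β).natDegree := natDegree_C_mul_le _ _
        _ = Fintype.card F ^ i * β.natDegree := natDegree_carlitzTpow_eval F hq3 i β hβ
        _ ≤ Fintype.card F ^ d * β.natDegree - 1 := by
            have h3 : Fintype.card F ^ i * 3 ≤ Fintype.card F ^ d := by
              calc Fintype.card F ^ i * 3 ≤ Fintype.card F ^ i * Fintype.card F := by
                    exact Nat.mul_le_mul_left _ hq3
                _ = Fintype.card F ^ (i+1) := by rw [pow_succ]
                _ ≤ Fintype.card F ^ d := Nat.pow_le_pow_right (by omega) (by omega)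
            have h4 : Fintype.card F ^ i * 3 * β.natDegree ≤ Fintype.card F ^ d * β.natDegree :=
              Nat.mul_le_mul_right _ h3
            have h5 : 1 ≤ Fintype.card F ^ i * β.natDegree := by
              have : 1 ≤ Fintype.card F ^ i := Nat.one_le_pow _ _ (by omega)
              nlinarith
            have h6 : Fintype.card F ^ i * 3 * β.natDegree
                = 3 * (Fintype.card F ^ i * β.natDegree) := by ring
            omega
    have := natDegree_sum_le_of_forall_le (Finset.range d) _ hbound
    omega
  rw [natDegree_add_eq_right_of_natDegree_lt (htop ▸ hrest), htop]

lemma carlitzEval_X_eq (α : Polynomial F) :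
    carlitzEval F X α = X * α + α ^ (Fintype.card F) := by
  have h : (X : Polynomial F) = X ^ 1 := (pow_one X).symm
  rw [h, carlitzEval_X_pow]
  show ((carlitzTpow F 0).comp _).eval α = _
  rw [eval_comp]
  simp [carlitzTpow]

lemma natDegree_carlitzEval_X_C (a : F) (ha : a ≠ 0) :
    (carlitzEval F X (Polynomial.C a)).natDegree = 1 := by
  rw [carlitzEval_X_eq, ← map_pow]
  have h1 : (X * Polynomial.C a).natDegree = 1 := by
    rw [mul_comm, natDegree_C_mul_X a ha]
  have hlt : (Polynomial.C (a ^ Fintype.card F)).natDegree < (X * Polynomial.C a).natDegree := by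
    rw [h1, natDegree_C]; omega
  rw [natDegree_add_eq_left_of_natDegree_lt hlt, h1]

lemma one_le_natDegree_carlitzEval_X (hq3 : 3 ≤ Fintype.card F) (α : Polynomial F)
    (hα : α ≠ 0) : 1 ≤ (carlitzEval F X α).natDegree := by
  rcases Nat.eq_zero_or_pos α.natDegree with h0 | h1
  · obtain ⟨a, rfl⟩ : ∃ a, α = Polynomial.C a := ⟨α.coeff 0, eq_C_of_natDegree_eq_zero h0⟩
    have ha : a ≠ 0 := fun h => hα (by rw [h, map_zero])
    rw [natDegree_carlitzEval_X_C F a ha]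
  · have h : (X : Polynomial F) = X ^ 1 := (pow_one X).symm
    rw [h, carlitzEval_X_pow, natDegree_carlitzTpow_eval F hq3 1 α h1]
    have : 1 ≤ Fintype.card F ^ 1 := by simpa using (by omega : 1 ≤ Fintype.card F)
    nlinarith

lemma isUnit_of_natDegree_eq_zero {p : Polynomial F} (hp : p ≠ 0) (h : p.natDegree = 0) :
    IsUnit p := by
  obtain ⟨a, rfl⟩ : ∃ a, p = Polynomial.C a := ⟨p.coeff 0, eq_C_of_natDegree_eq_zero h⟩
  exact isUnit_C.mpr (isUnit_iff_ne_zero.mpr fun h' => hp (by rw [h', map_zero]))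

end Aux3

/-- If `q ≥ 3`, `m ∈ 𝔽_q[T]` is monic of degree `d ≥ 1`, `α ∈ 𝔽_q[T]` is nonzero, and
`C_m(α)` is a monic irreducible polynomial, then `m` is irreducible and `α ∈ 𝔽_q^×`. -/
theorem carlitz_mersenne_necessary_shape (F : Type) [Field F] [Fintype F]
    (hq : 3 ≤ Fintype.card F)
    (m : Polynomial F) (hm : m.Monic) (d : ℕ) (hd : m.natDegree = d) (hd1 : 1 ≤ d)
    (α : Polynomial F) (hα : α ≠ 0)
    (hmonic : (carlitzEval F m α).Monic) (hirr : Irreducible (carlitzEval F m α)) :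
    Irreducible m ∧ ∃ c : F, c ≠ 0 ∧ α = Polynomial.C c := by
  have hm0 : m ≠ 0 := hm.ne_zero
  have hdm : 1 ≤ m.natDegree := hd ▸ hd1
  have hαc : ∃ c : F, c ≠ 0 ∧ α = Polynomial.C c := by
    obtain ⟨g, hg⟩ := self_dvd_carlitzEval F m α
    rcases hirr.isUnit_or_isUnit hg with hu | hu
    · obtain ⟨c, hc, hcα⟩ := Polynomial.isUnit_iff.mp hu
      exact ⟨c, hc.ne_zero, hcα.symm⟩
    · by_cases he : 1 ≤ α.natDegree
      · exfalso
        have hdeg := natDegree_carlitzEval F hq m hm0 α he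
        obtain ⟨u, hu0, hgu⟩ := Polynomial.isUnit_iff.mp hu
        have hPdeg : (carlitzEval F m α).natDegree = α.natDegree := by
          rw [hg, ← hgu, natDegree_mul_C hu0.ne_zero]
        rw [hdeg] at hPdeg
        have h3 : 3 ≤ Fintype.card F ^ m.natDegree :=
          le_trans hq (Nat.le_self_pow (by omega) _)
        nlinarith
      · push_neg at he
        have h0 : α.natDegree = 0 := by omega
        refine ⟨α.coeff 0, fun h => hα ?_, eq_C_of_natDegree_eq_zero h0⟩
        rw [eq_C_of_natDegree_eq_zero h0, h, map_zero]
  refine ⟨⟨fun hu => by have := natDegree_eq_zero_of_isUnit hu; omega, ?_⟩, hαc⟩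
  intro a b hab
  have ha0 : a ≠ 0 := fun h => hm0 (by rw [hab, h, zero_mul])
  have hb0 : b ≠ 0 := fun h => hm0 (by rw [hab, h, mul_zero])
  have hPab : carlitzEval F m α = carlitzEval F a (carlitzEval F b α) := by
    rw [hab, carlitzEval_mul]
  set β := carlitzEval F b α with hβdef
  obtain ⟨g, hg⟩ := self_dvd_carlitzEval F a β
  have hfact : carlitzEval F m α = β * g := by rw [hPab, ← hg]
  rcases hirr.isUnit_or_isUnit hfact with hβu | hgu
  · right
    by_contra hbnu
    have hdb : 1 ≤ b.natDegree := by
      rcases Nat.eq_zero_or_pos b.natDegree with h0 | h1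
      · exact absurd (isUnit_of_natDegree_eq_zero F hb0 h0) hbnu
      · exact h1
    have hγ : 1 ≤ (carlitzEval F X α).natDegree := one_le_natDegree_carlitzEval_X F hq α hα
    have h1 : carlitzEval F (X * b) α = carlitzEval F X β := by
      rw [carlitzEval_mul, hβdef]
    have h2 : carlitzEval F (X * b) α = carlitzEval F b (carlitzEval F X α) := by
      rw [mul_comm, carlitzEval_mul]
    have hL : (carlitzEval F b (carlitzEval F X α)).natDegree
        = Fintype.card F ^ b.natDegree * (carlitzEval F X α).natDegree :=
      natDegree_carlitzEval F hq b hb0 _ hγ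
    obtain ⟨c, hc, hcβ⟩ := Polynomial.isUnit_iff.mp hβu
    have hR : (carlitzEval F X β).natDegree = 1 := by
      rw [← hcβ]; exact natDegree_carlitzEval_X_C F c hc.ne_zero
    have hone : Fintype.card F ^ b.natDegree * (carlitzEval F X α).natDegree = 1 := by
      rw [← hL, ← h2, h1, hR]
    have h3 : 3 ≤ Fintype.card F ^ b.natDegree :=
      le_trans hq (Nat.le_self_pow (by omega) _)
    nlinarith
  · left
    by_contra hanu
    have hda : 1 ≤ a.natDegree := by
      rcases Nat.eq_zero_or_pos a.natDegree with h0 | h1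
      · exact absurd (isUnit_of_natDegree_eq_zero F ha0 h0) hanu
      · exact h1
    have hβ0 : β ≠ 0 := fun h => hirr.ne_zero (by rw [hfact, h, zero_mul])
    rcases Nat.eq_zero_or_pos β.natDegree with hβd | hβd
    · exact hirr.not_isUnit
        (by rw [hfact]; exact (isUnit_of_natDegree_eq_zero F hβ0 hβd).mul hgu)
    · have hdeg := natDegree_carlitzEval F hq a ha0 β hβd
      obtain ⟨u, hu0, hgu'⟩ := Polynomial.isUnit_iff.mp hgu
      have hPd : (carlitzEval F m α).natDegree = β.natDegree := by
        rw [hfact, ← hgu', natDegree_mul_C hu0.ne_zero]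
      have heq : Fintype.card F ^ a.natDegree * β.natDegree = β.natDegree := by
        rw [← hdeg, ← hPab, hPd]
      have h3 : 3 ≤ Fintype.card F ^ a.natDegree :=
        le_trans hq (Nat.le_self_pow (by omega) _)
      nlinarith
end

section
/- Let q be a prime power and A = 𝔽_q[T]. Let P ∈ A be a monic irreducible polynomial and let ℘_P be the Carlitz annihilator of P. Then ℘_P divides P − 1 in A. -/
open Polynomial Finset

section Aux

variable (F : Type) [Field F] [Fintype F]

lemma carlitzTpow_succ_def (n : ℕ) :
    carlitzTpow F (n + 1) =
      (carlitzTpow F n).comp (Polynomial.C Polynomial.X * X + X ^ (Fintype.card F)) := rfl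

lemma carlitzTpow_comp (n : ℕ) :
    (carlitzTpow F n).comp (Polynomial.C Polynomial.X * X + X ^ (Fintype.card F)) =
      Polynomial.C Polynomial.X * carlitzTpow F n + (carlitzTpow F n) ^ (Fintype.card F) := by
  induction n with
  | zero => simp [carlitzTpow]
  | succ n ih =>
      rw [carlitzTpow_succ_def, ih, add_comp, mul_comp, C_comp, pow_comp, ih]

lemma carlitzTpow_succ (n : ℕ) :
    carlitzTpow F (n + 1) =
      Polynomial.C Polynomial.X * carlitzTpow F n + (carlitzTpow F n) ^ (Fintype.card F) :=
  (carlitzTpow_succ_def F n).trans (carlitzTpow_comp F n)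

/-- The Carlitz coefficients `[T^n, i]`. -/
noncomputable def carD : ℕ → ℕ → Polynomial F
  | 0, 0 => 1
  | 0, _ + 1 => 0
  | n + 1, 0 => X * carD n 0
  | n + 1, i + 1 => X * carD n (i + 1) + (carD n i) ^ (Fintype.card F)

lemma carD_rec (n i : ℕ) :
    carD F (n + 1) (i + 1) = X * carD F n (i + 1) + (carD F n i) ^ (Fintype.card F) := rfl

lemma carD_zero_succ (i : ℕ) : carD F 0 (i + 1) = 0 := rfl

lemma carD_zero (n : ℕ) : carD F n 0 = X ^ n := by
  induction n with
  | zero => rfl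
  | succ n ih => rw [show carD F (n+1) 0 = X * carD F n 0 from rfl, ih, pow_succ]; ring

lemma carD_eq_zero : ∀ n i : ℕ, n < i → carD F n i = 0 := by
  intro n
  induction n with
  | zero =>
      rintro (_ | i) h
      · omega
      · rfl
  | succ n ih =>
      rintro (_ | i) h
      · omega
      · rw [carD_rec, ih (i + 1) (by omega), ih i (by omega), mul_zero, zero_pow
          Fintype.card_ne_zero, add_zero]

lemma carD_diag (n : ℕ) : carD F n n = 1 := by
  induction n with
  | zero => rfl
  | succ n ih =>
      rw [carD_rec, carD_eq_zero F n (n + 1) (by omega), mul_zero, ih, one_pow, zero_add]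



lemma carD_succ_succ
    (hfr : ∀ a b : Polynomial F,
      (a + b) ^ Fintype.card F = a ^ Fintype.card F + b ^ Fintype.card F) :
    ∀ n i : ℕ, carD F (n + 1) (i + 1) =
      carD F n (i + 1) * X ^ (Fintype.card F ^ (i + 1)) + carD F n i := by
  intro n
  induction n with
  | zero =>
      rintro (_ | i) <;>
        simp [carD_rec, carD_zero_succ, show carD F 0 0 = 1 from rfl,
          zero_pow Fintype.card_ne_zero]
  | succ n ih =>
      rintro (_ | i)
      · calc carD F (n + 2) 1
            = X * carD F (n + 1) 1 + (carD F (n + 1) 0) ^ Fintype.card F := carD_rec F (n+1) 0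
          _ = X * (carD F n 1 * X ^ (Fintype.card F ^ 1) + X ^ n)
                + (X ^ (n + 1)) ^ Fintype.card F := by
              rw [ih 0, carD_zero, carD_zero]
          _ = (X * carD F n 1 + (X ^ n) ^ Fintype.card F) * X ^ (Fintype.card F ^ 1)
                + X ^ (n + 1) := by
              ring
          _ = carD F (n + 1) 1 * X ^ (Fintype.card F ^ 1) + carD F (n + 1) 0 := by
              rw [carD_rec, carD_zero, carD_zero]
      · have hx : ((X : Polynomial (F))^(Fintype.card F ^ (i + 1))) ^ Fintype.card F
            = X ^ (Fintype.card F ^ (i + 2)) := by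
          rw [← pow_mul, ← pow_succ]
        calc carD F (n + 2) (i + 2)
            = X * carD F (n + 1) (i + 2) + (carD F (n + 1) (i + 1)) ^ Fintype.card F :=
              carD_rec F (n+1) (i+1)
          _ = X * (carD F n (i + 2) * X ^ (Fintype.card F ^ (i + 2)) + carD F n (i + 1))
                + ((carD F n (i + 1)) ^ Fintype.card F *
                    (X ^ (Fintype.card F ^ (i + 1))) ^ Fintype.card F
                  + (carD F n i) ^ Fintype.card F) := by
              rw [ih (i + 1), ih i, hfr, mul_pow]
          _ = (X * carD F n (i + 2) + (carD F n (i + 1)) ^ Fintype.card F)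
                * X ^ (Fintype.card F ^ (i + 2))
                + (X * carD F n (i + 1) + (carD F n i) ^ Fintype.card F) := by
              rw [hx]; ring
          _ = carD F (n + 1) (i + 2) * X ^ (Fintype.card F ^ (i + 2)) + carD F (n + 1) (i + 1) := by
              rw [carD_rec, carD_rec]

lemma carD_rel
    (hfr : ∀ a b : Polynomial F,
      (a + b) ^ Fintype.card F = a ^ Fintype.card F + b ^ Fintype.card F)
    (n i : ℕ) :
    carD F n (i + 1) * (X ^ (Fintype.card F ^ (i + 1)) - X) =
      (carD F n i) ^ Fintype.card F - carD F n i := by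
  have h1 := carD_rec F n i
  have h2 := carD_succ_succ F hfr n i
  linear_combination h1 - h2

lemma tpow_eval_one
    (hfrs : ∀ (s : Finset ℕ) (f : ℕ → Polynomial F),
      (∑ i ∈ s, f i) ^ Fintype.card F = ∑ i ∈ s, (f i) ^ Fintype.card F)
    (n : ℕ) :
    (carlitzTpow F n).eval 1 = ∑ i ∈ range (n + 1), carD F n i := by
  induction n with
  | zero => simp [carlitzTpow, show carD F 0 0 = 1 from rfl]
  | succ n ih =>
      rw [carlitzTpow_succ, eval_add, eval_mul, eval_C, eval_pow, ih]
      rw [Finset.sum_range_succ' (fun i => carD F (n + 1) i)]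
      have hsplit : ∑ i ∈ range (n + 1), carD F n i
          = ∑ i ∈ range (n + 1), carD F n (i + 1) + carD F n 0 := by
        have h := Finset.sum_range_succ (fun i => carD F n i) (n + 1)
        rw [carD_eq_zero F n (n + 1) (by omega), add_zero] at h
        rw [← h]
        exact Finset.sum_range_succ' (fun i => carD F n i) (n + 1)
      rw [hfrs]
      calc Polynomial.X * (∑ i ∈ range (n + 1), carD F n i)
            + ∑ i ∈ range (n + 1), (carD F n i) ^ Fintype.card F
          = ∑ i ∈ range (n + 1),
              (X * carD F n (i + 1) + (carD F n i) ^ Fintype.card F)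
              + X * carD F n 0 := by
            rw [hsplit, Finset.sum_add_distrib, mul_add, Finset.mul_sum]; ring
        _ = ∑ i ∈ range (n + 1), carD F (n + 1) (i + 1) + carD F (n + 1) 0 := by
            exact congrArg₂ (· + ·)
              (Finset.sum_congr rfl fun i _ => (carD_rec F n i).symm) rfl

end Aux

/-- The Carlitz annihilator `℘_P` of a monic irreducible `P ∈ 𝔽_q[T]` divides `P - 1`. -/
theorem carlitz_annihilator_dvd_sub_one (F : Type) [Field F] [Fintype F]
    (P : Polynomial F) (hP : P.Monic) (hPirr : Irreducible P)
    (℘P : Polynomial F) (h1 : ℘P.Monic) (h2 : 0 < ℘P.natDegree)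
    (h3 : ∀ a : Polynomial F, a ≠ 0 → (℘P ∣ a ↔ P ∣ carlitzEval F a 1)) :
    ℘P ∣ P - 1 := by
  classical
  have hq2 : 1 < Fintype.card F := Fintype.one_lt_card
  obtain ⟨e, hp, he⟩ := FiniteField.card F (ringChar F)
  set p := ringChar F with hpdef
  haveI : Fact p.Prime := ⟨hp⟩
  haveI : CharP (Polynomial F) p := Polynomial.instCharP p
  have hfr : ∀ a b : Polynomial F,
      (a + b) ^ Fintype.card F = a ^ Fintype.card F + b ^ Fintype.card F := by
    intro a b; rw [he]; exact add_pow_char_pow (p := p) (n := (e : ℕ)) a b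
  have hfrs : ∀ (s : Finset ℕ) (f : ℕ → Polynomial F),
      (∑ i ∈ s, f i) ^ Fintype.card F = ∑ i ∈ s, (f i) ^ Fintype.card F := by
    intro s f; rw [he]; exact sum_pow_char_pow (p := p) (n := (e : ℕ)) s f
  set d := P.natDegree with hddef
  have hd : 0 < d := hPirr.natDegree_pos
  set E : ℕ → Polynomial F :=
    fun i => ∑ j ∈ range (d + 1), Polynomial.C (P.coeff j) * carD F j i with hEdef
  -- evaluation of the Carlitz polynomial of `P` at 1
  have hzero : ∀ n : ℕ, Polynomial.C (Polynomial.C (0 : F)) * carlitzTpow F n = 0 := by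
    intro n; simp
  have hEval : carlitzEval F P 1 = ∑ i ∈ range (d + 1), E i := by
    rw [carlitzEval, carlitz,
      Polynomial.sum_over_range' P hzero (d + 1) (by omega), eval_finset_sum]
    have hterm : ∀ j ∈ range (d + 1),
        eval 1 (Polynomial.C (Polynomial.C (P.coeff j)) * carlitzTpow F j)
          = ∑ i ∈ range (d + 1), Polynomial.C (P.coeff j) * carD F j i := by
      intro j hj
      rw [eval_mul, eval_C, tpow_eval_one F hfrs j, Finset.mul_sum]
      simp only [mem_range] at hj
      refine Finset.sum_subset (Finset.range_subset_range.mpr (by omega)) ?_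
      intro x hx hnx
      simp only [mem_range] at hnx
      rw [carD_eq_zero F j x (by omega), mul_zero]
    rw [Finset.sum_congr rfl hterm, Finset.sum_comm]
  have hE0 : E 0 = P := by
    simp only [hEdef]
    conv_rhs => rw [P.as_sum_range' (d + 1) (by omega)]
    exact Finset.sum_congr rfl fun j _ => by
      rw [carD_zero, C_mul_X_pow_eq_monomial]
  have hEd : E d = 1 := by
    simp only [hEdef]
    rw [Finset.sum_eq_single_of_mem d (self_mem_range_succ d)]
    · rw [carD_diag, mul_one, show P.coeff d = 1 from hP, map_one]
    · intro j hj hjd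
      simp only [mem_range] at hj
      rw [carD_eq_zero F j d (by omega), mul_zero]
  have hErel : ∀ i : ℕ,
      E (i + 1) * ((X : Polynomial F) ^ (Fintype.card F ^ (i + 1)) - X)
        = E i ^ Fintype.card F - E i := by
    intro i
    have hpow : E i ^ Fintype.card F
        = ∑ j ∈ range (d + 1), Polynomial.C (P.coeff j) * (carD F j i) ^ Fintype.card F := by
      simp only [hEdef]
      rw [hfrs]
      refine Finset.sum_congr rfl fun j _ => ?_
      rw [mul_pow, ← map_pow, FiniteField.pow_card]
    rw [hpow]
    simp only [hEdef]
    rw [Finset.sum_mul, ← Finset.sum_sub_distrib]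
    refine Finset.sum_congr rfl fun j _ => ?_
    rw [mul_assoc, carD_rel F hfr j i, mul_sub]
  -- pass to the residue field
  haveI := Fact.mk hPirr
  have hP0 : P ≠ 0 := hP.ne_zero
  haveI : Fintype (AdjoinRoot P) := Module.fintypeOfFintype (AdjoinRoot.powerBasis hP0).basis
  haveI : CharP (AdjoinRoot P) p :=
    charP_of_injective_algebraMap (algebraMap F (AdjoinRoot P)).injective p
  set π := AdjoinRoot.mk P with hπdef
  set θ := AdjoinRoot.root P with hθdef
  have hcard : Fintype.card (AdjoinRoot P) = Fintype.card F ^ d := by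
    rw [Module.card_fintype (AdjoinRoot.powerBasis hP0).basis, Fintype.card_fin,
      AdjoinRoot.powerBasis_dim]
  have hfix : ∀ i : ℕ, θ ^ (Fintype.card F ^ i) = θ →
      ∀ x : AdjoinRoot P, x ^ (Fintype.card F ^ i) = x := by
    intro i hθi x
    have hqi : Fintype.card F ^ i = p ^ (e * i) := by rw [he, ← pow_mul]
    induction x using AdjoinRoot.induction_on with
    | ih f =>
      induction f using Polynomial.induction_on' with
      | add f g hf hg =>
        rw [map_add, hqi, add_pow_char_pow, ← hqi, hf, hg]
      | monomial n a =>
        rw [← C_mul_X_pow_eq_monomial, map_mul, map_pow, AdjoinRoot.mk_X, mul_pow,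
          ← map_pow, ← map_pow, FiniteField.pow_card_pow, pow_right_comm, hθi]
  have hne : ∀ i : ℕ, 0 < i → i < d → θ ^ (Fintype.card F ^ i) ≠ θ := by
    intro i hi0 hid hcontra
    have hall := hfix i hcontra
    set f : Polynomial (AdjoinRoot P) := X ^ (Fintype.card F ^ i) - X with hfdef
    have h1q : 1 < Fintype.card F ^ i := by
      calc 1 < Fintype.card F := hq2
        _ = Fintype.card F ^ 1 := (pow_one _).symm
        _ ≤ Fintype.card F ^ i := Nat.pow_le_pow_right (by omega) hi0
    have hdeg : f.natDegree = Fintype.card F ^ i := by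
      rw [hfdef, natDegree_sub_eq_left_of_natDegree_lt, natDegree_X_pow]
      rw [natDegree_X_pow, natDegree_X]; omega
    have hf0 : f ≠ 0 := fun hh => by rw [hh, natDegree_zero] at hdeg; omega
    have hsub : (Finset.univ : Finset (AdjoinRoot P)) ⊆ f.roots.toFinset := by
      intro x _
      refine Multiset.mem_toFinset.mpr (mem_roots'.mpr ⟨hf0, ?_⟩)
      rw [hfdef, IsRoot, eval_sub, eval_pow, eval_X, hall x, sub_self]
    have hle : Fintype.card (AdjoinRoot P) ≤ Fintype.card F ^ i := by
      calc Fintype.card (AdjoinRoot P) = (Finset.univ : Finset (AdjoinRoot P)).card := rfl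
        _ ≤ f.roots.toFinset.card := Finset.card_le_card hsub
        _ ≤ Multiset.card f.roots := Multiset.toFinset_card_le _
        _ ≤ f.natDegree := f.card_roots'
        _ = Fintype.card F ^ i := hdeg
    rw [hcard] at hle
    exact absurd hle (not_le.mpr (Nat.pow_lt_pow_right hq2 hid))
  have hEzero : ∀ i : ℕ, i < d → π (E i) = 0 := by
    intro i
    induction i with
    | zero => intro _; rw [hE0, hπdef]; exact AdjoinRoot.mk_self
    | succ i ih =>
      intro hlt
      have h := congrArg π (hErel i)
      rw [map_mul, map_sub, map_pow, map_sub, map_pow, AdjoinRoot.mk_X, ih (by omega),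
        zero_pow Fintype.card_ne_zero, sub_self] at h
      rcases mul_eq_zero.mp h with h' | h'
      · exact h'
      · exact absurd (sub_eq_zero.mp h') (hne (i + 1) (by omega) hlt)
  have hsum : π (carlitzEval F P 1) = 1 := by
    rw [hEval, map_sum, Finset.sum_eq_single_of_mem d (self_mem_range_succ d)]
    · rw [hEd, map_one]
    · intro j hj hjd
      simp only [mem_range] at hj
      exact hEzero j (by omega)
  -- conclude
  have hP1ne : P - 1 ≠ 0 := by
    intro hh
    exact hPirr.not_isUnit (sub_eq_zero.mp hh ▸ isUnit_one)
  rw [h3 _ hP1ne]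
  have hsubeval : carlitzEval F (P - 1) 1 = carlitzEval F P 1 - 1 := by
    have hrw : P - 1 = P + Polynomial.C (-1 : F) := by rw [map_neg, map_one]; ring
    rw [carlitzEval, carlitz, hrw, Polynomial.sum_add_index _ _ _
      (fun i => hzero i)
      (fun a b₁ b₂ => by rw [← add_mul, ← map_add, ← map_add]),
      Polynomial.sum_C_index (by simpa using hzero 0)]
    rw [eval_add, eval_mul, eval_C,
      show carlitzTpow F 0 = (X : Polynomial (Polynomial F)) from rfl, eval_X, mul_one,
      map_neg, map_one, carlitzEval, carlitz]
    ring
  rw [← AdjoinRoot.mk_eq_zero, hsubeval, map_sub, map_one, hsum, sub_self]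
end

section
/- Let q be a prime power and A = 𝔽_q[T]. Let P ∈ A be a monic irreducible polynomial, α ∈ 𝔽_q^×, and M_P = α·C_P(1) the associated Mersenne number. If Q ∈ A is a monic irreducible polynomial dividing M_P, then the Carlitz annihilator ℘_Q of Q equals P. -/
open Polynomial

/-- If a monic irreducible `Q` divides the Mersenne number `M_P = α·C_P(1)`, then the
Carlitz annihilator `℘_Q` of `Q` equals `P`. -/
theorem carlitz_annihilator_of_mersenne_divisor (F : Type) [Field F] [Fintype F]
    (P : Polynomial F) (hP : P.Monic) (hPirr : Irreducible P) (α : F) (hα : α ≠ 0)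
    (Q : Polynomial F) (hQ : Q.Monic) (hQirr : Irreducible Q)
    (hdvd : Q ∣ Polynomial.C α * carlitzEval F P 1)
    (℘Q : Polynomial F) (h1 : ℘Q.Monic) (h2 : 0 < ℘Q.natDegree)
    (h3 : ∀ a : Polynomial F, a ≠ 0 → (℘Q ∣ a ↔ Q ∣ carlitzEval F a 1)) :
    ℘Q = P := by
  have hu : IsUnit (Polynomial.C α) := Polynomial.isUnit_C.mpr hα.isUnit
  have hQ1 : Q ∣ carlitzEval F P 1 := hu.dvd_mul_left.mp hdvd
  have hdvdP : ℘Q ∣ P := (h3 P hP.ne_zero).mpr hQ1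
  have hnotunit : ¬ IsUnit ℘Q := by
    intro h
    have := Polynomial.natDegree_eq_zero_of_isUnit h
    omega
  obtain ⟨c, hc⟩ := hdvdP
  have hcu : IsUnit c := (hPirr.isUnit_or_isUnit hc).resolve_left hnotunit
  exact Polynomial.eq_of_monic_of_associated h1 hP ⟨hcu.unit, by rw [hc]; rfl⟩
end

section
/- Let q be a prime power and A = 𝔽_q[T]. Let P ∈ A be a monic irreducible polynomial and let ℘_P be the Carlitz annihilator of P. Then ℘_P is irreducible in A if and only if there exists a monic irreducible polynomial Q ∈ A such that P divides C_Q(1). -/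
open Polynomial

/-- The Carlitz annihilator `℘_P` of a monic irreducible `P` is irreducible if and only if
`P` divides `C_Q(1)` for some monic irreducible `Q`. -/
theorem carlitz_annihilator_irreducible_iff (F : Type) [Field F] [Fintype F]
    (P : Polynomial F) (hP : P.Monic) (hPirr : Irreducible P)
    (℘P : Polynomial F) (h1 : ℘P.Monic) (h2 : 0 < ℘P.natDegree)
    (h3 : ∀ a : Polynomial F, a ≠ 0 → (℘P ∣ a ↔ P ∣ carlitzEval F a 1)) :
    Irreducible ℘P ↔
      ∃ Q : Polynomial F, Q.Monic ∧ Irreducible Q ∧ P ∣ carlitzEval F Q 1 := by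
  have hnotunit : ¬ IsUnit ℘P := by
    intro hu
    have := Polynomial.natDegree_eq_zero_of_isUnit hu
    omega
  constructor
  · intro h
    exact ⟨℘P, h1, h, (h3 ℘P h1.ne_zero).mp dvd_rfl⟩
  · rintro ⟨Q, hQm, hQirr, hdvd⟩
    have hdvd' : ℘P ∣ Q := (h3 Q hQm.ne_zero).mpr hdvd
    obtain ⟨c, hc⟩ := hdvd'
    rcases hQirr.isUnit_or_isUnit hc with h | h
    · exact absurd h hnotunit
    · obtain ⟨u, rfl⟩ := h
      have : Associated ℘P Q := ⟨u, hc.symm⟩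
      exact this.symm.irreducible hQirr
end
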